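/- arXiv:0907.1853 — 5 statements merged into one kernel-verified Lean document; each statement's English description precedes it below -/
import Mathlib

section
/- Let T > 0, λ > 0, μ > 0, r ∈ ℝ, and p_min ≤ p_max be real numbers. Set f = 1 − (1 − e^{−μT})/(μT) and g = (1 − f) e^{−rT} e^{−λT}. Then the expected discounted payoff of the auxiliary sale model, given by the double series ∑_{n=0}^∞ ∑_{i=1}^n ( p_max − (p_max − p_min)·i/(n+1) ) · e^{−rT} (1 − f) f^{i−1} · (λT)^n e^{−λT}/n!, equals the closed form −g (p_max − p_min)/(1 − f)² · ( f e^{λTf} − (e^{λTf} − 1)/(λT) − e^{λTf} + (e^{λT} − 1)/(λT) ) + p_max g (e^{λT} − e^{λTf})/(1 − f). -/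
open Real

-- geometric sum lemmas
lemma geomA (f : ℝ) (n : ℕ) :
    (1 - f) * ∑ i ∈ Finset.Icc 1 n, f ^ (i - 1) = 1 - f ^ n := by
  induction n with
  | zero => simp
  | succ n ih =>
    rw [Finset.sum_Icc_succ_top (Nat.le_add_left 1 n), mul_add, ih]
    simp only [Nat.add_sub_cancel]
    ring

lemma geomB (f : ℝ) (n : ℕ) :
    (1 - f) ^ 2 * ∑ i ∈ Finset.Icc 1 n, (i : ℝ) * f ^ (i - 1)
      = 1 - ((n : ℝ) + 1) * f ^ n + (n : ℝ) * f ^ (n + 1) := by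
  induction n with
  | zero => simp
  | succ n ih =>
    rw [Finset.sum_Icc_succ_top (Nat.le_add_left 1 n), mul_add, ih]
    simp only [Nat.add_sub_cancel]
    push_cast
    ring

-- exp tsum
lemma exp_tsum (x : ℝ) : ∑' n : ℕ, x ^ n / (n.factorial : ℝ) = Real.exp x := by
  rw [Real.exp_eq_exp_ℝ, NormedSpace.exp_eq_tsum_div]

lemma summable_shift (x : ℝ) :
    Summable (fun n : ℕ => x ^ n / ((n + 1).factorial : ℝ)) := by
  have h := (Real.summable_pow_div_factorial x).comp_injective Nat.succ_injective
  have h2 : Summable (fun n : ℕ => x⁻¹ * (x ^ (n + 1) / ((n + 1).factorial : ℝ))) :=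
    h.mul_left _
  rcases eq_or_ne x 0 with hx | hx
  · apply summable_of_ne_finset_zero (s := {0})
    intro n hn
    simp [hx, zero_pow (by simpa using hn : n ≠ 0)]
  · convert h2 using 2 with n
    rw [pow_succ]
    field_simp

lemma tsum_shift (x : ℝ) (hx : x ≠ 0) :
    ∑' n : ℕ, x ^ n / ((n + 1).factorial : ℝ) = (Real.exp x - 1) / x := by
  have hs := Real.summable_pow_div_factorial x
  have h0 : ∑' n : ℕ, x ^ n / (n.factorial : ℝ)
      = x ^ 0 / (Nat.factorial 0 : ℝ) + ∑' n : ℕ, x ^ (n + 1) / ((n + 1).factorial : ℝ) :=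
    Summable.tsum_eq_zero_add hs
  have h1 : ∑' n : ℕ, x ^ (n + 1) / ((n + 1).factorial : ℝ) = Real.exp x - 1 := by
    rw [exp_tsum] at h0
    simp at h0
    linarith
  have h2 : ∑' n : ℕ, x ^ n / ((n + 1).factorial : ℝ)
      = ∑' n : ℕ, x⁻¹ * (x ^ (n + 1) / ((n + 1).factorial : ℝ)) := by
    congr 1 with n
    rw [pow_succ]
    field_simp
  rw [h2, tsum_mul_left, h1]
  field_simp


/-- The expected discounted payoff of the auxiliary sale model, given as a double
series over the number of offers `n` and the rank `i` of the accepted offer,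
equals the stated closed form. -/
theorem auxiliary_model_payoff_closed_form
    (T lam mu r pmin pmax : ℝ) (hT : 0 < T) (hlam : 0 < lam) (hmu : 0 < mu)
    (hp : pmin ≤ pmax) (f g : ℝ)
    (hf : f = 1 - (1 - Real.exp (-mu * T)) / (mu * T))
    (hg : g = (1 - f) * Real.exp (-r * T) * Real.exp (-lam * T)) :
    (∑' n : ℕ, ∑ i ∈ Finset.Icc 1 n,
        (pmax - (pmax - pmin) * (i : ℝ) / ((n : ℝ) + 1)) * Real.exp (-r * T) * (1 - f)
          * f ^ (i - 1) * ((lam * T) ^ n * Real.exp (-lam * T) / (n.factorial : ℝ)))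
      = -g * (pmax - pmin) / (1 - f) ^ 2
          * (f * Real.exp (lam * T * f) - (Real.exp (lam * T * f) - 1) / (lam * T)
              - Real.exp (lam * T * f) + (Real.exp (lam * T) - 1) / (lam * T))
        + pmax * g * (Real.exp (lam * T) - Real.exp (lam * T * f)) / (1 - f) := by
  have hmuT : 0 < mu * T := mul_pos hmu hT
  have hexp := Real.add_one_lt_exp (x := -(mu * T)) (by nlinarith)
  have hexp1 : Real.exp (-(mu * T)) < 1 := Real.exp_lt_one_iff.mpr (by nlinarith)
  have hfpos : 0 < f := by
    rw [hf, neg_mul]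
    rw [sub_pos, div_lt_one hmuT]
    linarith
  have hflt : f < 1 := by
    rw [hf, neg_mul]
    have : 0 < (1 - Real.exp (-(mu * T))) / (mu * T) := div_pos (by linarith) hmuT
    linarith
  have h1f : (1 : ℝ) - f ≠ 0 := by linarith
  have hy : (0:ℝ) < lam * T := mul_pos hlam hT
  have hz : (0:ℝ) < lam * T * f := mul_pos hy hfpos
  have key : ∀ n : ℕ, (∑ i ∈ Finset.Icc 1 n,
        (pmax - (pmax - pmin) * (i : ℝ) / ((n : ℝ) + 1)) * Real.exp (-r * T) * (1 - f)
          * f ^ (i - 1) * ((lam * T) ^ n * Real.exp (-lam * T) / (n.factorial : ℝ)))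
      = (g * pmax / (1 - f)) * ((lam * T) ^ n / (n.factorial : ℝ))
        + (-(g * pmin) / (1 - f)) * ((lam * T * f) ^ n / (n.factorial : ℝ))
        + (-(g * (pmax - pmin)) / (1 - f) ^ 2) * ((lam * T) ^ n / ((n + 1).factorial : ℝ))
        + (g * (pmax - pmin) * f / (1 - f) ^ 2)
            * ((lam * T * f) ^ n / ((n + 1).factorial : ℝ)) := by
    intro n
    have hn1 : ((n : ℝ) + 1) ≠ 0 := by positivity
    have hSa : ∑ i ∈ Finset.Icc 1 n, f ^ (i - 1) = (1 - f ^ n) / (1 - f) := by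
      rw [eq_div_iff h1f, mul_comm]; exact geomA f n
    have hSb : ∑ i ∈ Finset.Icc 1 n, (i : ℝ) * f ^ (i - 1)
        = (1 - ((n : ℝ) + 1) * f ^ n + (n : ℝ) * f ^ (n + 1)) / (1 - f) ^ 2 := by
      rw [eq_div_iff (pow_ne_zero 2 h1f), mul_comm]; exact geomB f n
    have step : ∀ i ∈ Finset.Icc 1 n,
        (pmax - (pmax - pmin) * (i : ℝ) / ((n : ℝ) + 1)) * Real.exp (-r * T) * (1 - f)
          * f ^ (i - 1) * ((lam * T) ^ n * Real.exp (-lam * T) / (n.factorial : ℝ))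
        = (Real.exp (-r * T) * (1 - f) * ((lam * T) ^ n * Real.exp (-lam * T)
              / (n.factorial : ℝ)) * pmax) * f ^ (i - 1)
          - (Real.exp (-r * T) * (1 - f) * ((lam * T) ^ n * Real.exp (-lam * T)
              / (n.factorial : ℝ)) * (pmax - pmin) / ((n : ℝ) + 1))
            * ((i : ℝ) * f ^ (i - 1)) := by
      intro i _
      ring
    rw [Finset.sum_congr rfl step, Finset.sum_sub_distrib, ← Finset.mul_sum, ← Finset.mul_sum,
      hSa, hSb, hg]
    have hfact : (((n + 1).factorial : ℕ) : ℝ) = ((n : ℝ) + 1) * (n.factorial : ℝ) := by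
      rw [Nat.factorial_succ]; push_cast; ring
    have hnfact : ((n.factorial : ℕ) : ℝ) ≠ 0 := Nat.cast_ne_zero.mpr n.factorial_ne_zero
    rw [hfact]
    field_simp
    ring
  rw [tsum_congr key]
  have s1 : Summable (fun n : ℕ => (g * pmax / (1 - f)) * ((lam * T) ^ n / (n.factorial : ℝ))) :=
    (Real.summable_pow_div_factorial _).mul_left _
  have s2 : Summable (fun n : ℕ =>
      (-(g * pmin) / (1 - f)) * ((lam * T * f) ^ n / (n.factorial : ℝ))) :=
    (Real.summable_pow_div_factorial _).mul_left _
  have s3 : Summable (fun n : ℕ =>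
      (-(g * (pmax - pmin)) / (1 - f) ^ 2) * ((lam * T) ^ n / ((n + 1).factorial : ℝ))) :=
    (summable_shift _).mul_left _
  have s4 : Summable (fun n : ℕ =>
      (g * (pmax - pmin) * f / (1 - f) ^ 2) * ((lam * T * f) ^ n / ((n + 1).factorial : ℝ))) :=
    (summable_shift _).mul_left _
  rw [Summable.tsum_add ((s1.add s2).add s3) s4, Summable.tsum_add (s1.add s2) s3, Summable.tsum_add s1 s2,
    tsum_mul_left, tsum_mul_left, tsum_mul_left, tsum_mul_left,
    exp_tsum, exp_tsum, tsum_shift _ hy.ne', tsum_shift _ hz.ne']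
  field_simp
  ring
end

section
/- Let λ > 0, μ > 0, r > 0, and p_min ≤ R ≤ L < p_max. Set x = (L − R)/(p_max − p_min) and y = (p_max − L)/(p_max − p_min), and define for T > 0: w(T) = (1 − e^{−λTy}) ((p_max + L)/2) (λy/(λy + r)) + e^{−λTy} u(T, λx, μ, R, L, r), where u is the closed-form auxiliary payoff function. Then lim_{T→∞} w(T) = ((p_max + L)/2) (λy/(λy + r)). -/
open Real Filter

/-- `f(T,μ) = 1 − (1 − e^{−μT})/(μT)`. -/
noncomputable def fAux (T mu : ℝ) : ℝ := 1 - (1 - Real.exp (-mu * T)) / (mu * T)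

/-- `g(T,λ,μ,r) = (1 − f) e^{−rT} e^{−λT}`. -/
noncomputable def gAux (T lam mu r : ℝ) : ℝ :=
  (1 - fAux T mu) * Real.exp (-r * T) * Real.exp (-lam * T)

/-- The closed-form expected discounted payoff `u(T, λ, μ, p_min, p_max, r)`
of the auxiliary sale model. -/
noncomputable def uAux (T lam mu pmin pmax r : ℝ) : ℝ :=
  -gAux T lam mu r * (pmax - pmin) / (1 - fAux T mu) ^ 2
      * (fAux T mu * Real.exp (lam * T * fAux T mu)
          - (Real.exp (lam * T * fAux T mu) - 1) / (lam * T)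
          - Real.exp (lam * T * fAux T mu)
          + (Real.exp (lam * T) - 1) / (lam * T))
    + pmax * gAux T lam mu r
        * (Real.exp (lam * T) - Real.exp (lam * T * fAux T mu)) / (1 - fAux T mu)

lemma fAux_nonneg {T mu : ℝ} (hmu : 0 < mu) (hT : 0 < T) : 0 ≤ fAux T mu := by
  have hs : 0 < mu * T := mul_pos hmu hT
  have h := Real.add_one_le_exp (-mu * T)
  rw [fAux, sub_nonneg, div_le_one hs]
  nlinarith

lemma fAux_lt_one {T mu : ℝ} (hmu : 0 < mu) (hT : 0 < T) : fAux T mu < 1 := by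
  have hs : 0 < mu * T := mul_pos hmu hT
  have h : Real.exp (-mu * T) < 1 := by
    rw [Real.exp_lt_one_iff]; nlinarith
  have : 0 < (1 - Real.exp (-mu * T)) / (mu * T) := div_pos (by linarith) hs
  rw [fAux]; linarith

lemma one_sub_fAux_lb {T mu : ℝ} (hmu : 0 < mu) (hT : 1 ≤ T) :
    (1 - Real.exp (-mu)) / (mu * T) ≤ 1 - fAux T mu := by
  have hT0 : 0 < T := lt_of_lt_of_le one_pos hT
  have hs : 0 < mu * T := mul_pos hmu hT0
  have hmono : Real.exp (-mu * T) ≤ Real.exp (-mu) := by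
    apply Real.exp_le_exp.mpr; nlinarith
  rw [fAux]
  have h2 : (1 - Real.exp (-mu)) / (mu * T) ≤ (1 - Real.exp (-mu * T)) / (mu * T) := by
    gcongr
  linarith

lemma uAux_eq (T a mu r R L : ℝ) (hf : 1 - fAux T mu ≠ 0) :
    uAux T a mu R L r =
      Real.exp (-r * T) *
        (-((L - R) / (1 - fAux T mu)) *
            ((fAux T mu * Real.exp (a * T * fAux T mu)
              - (Real.exp (a * T * fAux T mu) - 1) / (a * T)
              - Real.exp (a * T * fAux T mu)
              + (Real.exp (a * T) - 1) / (a * T)) * Real.exp (-a * T))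
          + L * ((Real.exp (a * T) - Real.exp (a * T * fAux T mu)) * Real.exp (-a * T))) := by
  rw [uAux, gAux]
  field_simp

set_option maxHeartbeats 1000000 in
/-- In the public list price model, the expected discounted payoff `w(T)` tends to
`((p_max + L)/2)(λy/(λy + r))` as the waiting time `T → ∞`. -/
theorem list_price_payoff_asymptote
    (lam mu r pmin pmax R L x y : ℝ)
    (hlam : 0 < lam) (hmu : 0 < mu) (hr : 0 < r)
    (h1 : pmin ≤ R) (h2 : R ≤ L) (h3 : L < pmax)
    (hx : x = (L - R) / (pmax - pmin)) (hy : y = (pmax - L) / (pmax - pmin)) :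
    Tendsto
      (fun T : ℝ =>
        (1 - Real.exp (-(lam * T * y))) * ((pmax + L) / 2) * (lam * y / (lam * y + r))
          + Real.exp (-(lam * T * y)) * uAux T (lam * x) mu R L r)
      atTop (nhds (((pmax + L) / 2) * (lam * y / (lam * y + r)))) := by
  have hpp : 0 < pmax - pmin := by linarith
  have hy0 : 0 < y := by rw [hy]; exact div_pos (by linarith) hpp
  have hK : 0 < lam * y := mul_pos hlam hy0
  have hexp0 : Tendsto (fun T : ℝ => Real.exp (-(lam * T * y))) atTop (nhds 0) := by
    have hlin : Tendsto (fun T : ℝ => (lam * y) * T) atTop atTop :=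
      Tendsto.const_mul_atTop hK tendsto_id
    have h2' := Real.tendsto_exp_neg_atTop_nhds_zero.comp hlin
    refine h2'.congr fun T => ?_
    simp only [Function.comp_apply]
    ring_nf
  have hA1 : Tendsto (fun T : ℝ => 1 - Real.exp (-(lam * T * y))) atTop (nhds 1) := by
    simpa using tendsto_const_nhds.sub hexp0
  have hA : Tendsto (fun T : ℝ =>
      (1 - Real.exp (-(lam * T * y))) * ((pmax + L) / 2) * (lam * y / (lam * y + r)))
      atTop (nhds (1 * ((pmax + L) / 2) * (lam * y / (lam * y + r)))) :=
    (hA1.mul_const ((pmax + L) / 2)).mul_const (lam * y / (lam * y + r))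
  have hB : Tendsto (fun T : ℝ => Real.exp (-(lam * T * y)) * uAux T (lam * x) mu R L r)
      atTop (nhds 0) := by
    rcases h2.eq_or_lt with hRL | hRL
    · -- R = L : uAux vanishes identically
      subst hRL
      have hx0 : lam * x = 0 := by rw [hx]; simp
      have huz : (fun T : ℝ => Real.exp (-(lam * T * y)) * uAux T (lam * x) mu R R r)
          = fun _ => (0 : ℝ) := by
        funext T
        rw [hx0]
        simp [uAux, sub_self]
      rw [huz]; exact tendsto_const_nhds
    · set a := lam * x with haDef
      have hx0 : 0 < x := by rw [hx]; exact div_pos (by linarith) hpp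
      have ha0 : 0 < a := mul_pos hlam hx0
      have hd : 0 < 1 - Real.exp (-mu) := by
        have : Real.exp (-mu) < 1 := by rw [Real.exp_lt_one_iff]; linarith
        linarith
      set C := (L - R) * (2 + 2 / a) * (mu / (1 - Real.exp (-mu))) with hC
      -- the dominating function tends to zero
      have hg : Tendsto (fun T : ℝ => Real.exp (-r * T) * (C * T + |L|)) atTop (nhds 0) := by
        have h1' : Tendsto (fun z : ℝ => z * Real.exp (-z)) atTop (nhds 0) := by
          simpa using Real.tendsto_pow_mul_exp_neg_atTop_nhds_zero 1
        have h2' : Tendsto (fun T : ℝ => r * T) atTop atTop :=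
          Tendsto.const_mul_atTop hr tendsto_id
        have h3' : Tendsto (fun T : ℝ => r * T * Real.exp (-(r * T))) atTop (nhds 0) :=
          h1'.comp h2'
        have h4' : Tendsto (fun T : ℝ => Real.exp (-(r * T))) atTop (nhds 0) :=
          Real.tendsto_exp_neg_atTop_nhds_zero.comp h2'
        have h5' := (h3'.const_mul (C / r)).add (h4'.const_mul |L|)
        have heq : (fun T : ℝ => Real.exp (-r * T) * (C * T + |L|))
            = fun T : ℝ => C / r * (r * T * Real.exp (-(r * T))) + |L| * Real.exp (-(r * T)) := by
          funext T
          have hneg : -r * T = -(r * T) := by ring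
          rw [hneg]
          field_simp
        rw [heq]
        simpa using h5'
      apply squeeze_zero_norm' ?_ hg
      filter_upwards [eventually_ge_atTop (1 : ℝ)] with T hT
      have hT0 : (0 : ℝ) < T := lt_of_lt_of_le one_pos hT
      have hf0 : 0 ≤ fAux T mu := fAux_nonneg hmu hT0
      have hf1 : fAux T mu < 1 := fAux_lt_one hmu hT0
      have h1f : 0 < 1 - fAux T mu := by linarith
      have hflb : (1 - Real.exp (-mu)) / (mu * T) ≤ 1 - fAux T mu := one_sub_fAux_lb hmu hT
      rw [uAux_eq T a mu r R L (ne_of_gt h1f)]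
      set f := fAux T mu with hfdef
      set Q := Real.exp (a * T * f) with hQdef
      set P := Real.exp (a * T) with hPdef
      set E := Real.exp (-a * T) with hEdef
      have hE0 : 0 < E := Real.exp_pos _
      have hP0 : 0 < P := Real.exp_pos _
      have hPE : P * E = 1 := by
        rw [hPdef, hEdef, ← Real.exp_add]; norm_num
      have haT : 0 < a * T := mul_pos ha0 hT0
      have haT1 : a ≤ a * T := by nlinarith
      have hQ1 : 1 ≤ Q := by
        rw [hQdef]; apply Real.one_le_exp; positivity
      have hQP : Q ≤ P := by
        rw [hQdef, hPdef]; apply Real.exp_le_exp.mpr; nlinarith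
      clear_value a C f Q P E
      have hQE : Q * E ≤ 1 := by
        calc Q * E ≤ P * E := mul_le_mul_of_nonneg_right hQP hE0.le
          _ = 1 := hPE
      have hQE0 : 0 ≤ Q * E := by positivity
      -- bounds for the division terms
      have hq1 : (Q - 1) / (a * T) * E ≤ 1 / a := by
        rw [div_mul_eq_mul_div]
        exact div_le_div₀ zero_le_one (by nlinarith [hQE, hE0.le]) ha0 haT1
      have hq0 : 0 ≤ (Q - 1) / (a * T) * E := by
        apply mul_nonneg (div_nonneg (by linarith) haT.le) hE0.le
      have hp1 : (P - 1) / (a * T) * E ≤ 1 / a := by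
        rw [div_mul_eq_mul_div]
        exact div_le_div₀ zero_le_one (by nlinarith [hPE, hE0.le]) ha0 haT1
      have hp0 : 0 ≤ (P - 1) / (a * T) * E := by
        apply mul_nonneg (div_nonneg (by linarith) haT.le) hE0.le
      -- bound on the bracket A * E
      have hAEeq : (f * Q - (Q - 1) / (a * T) - Q + (P - 1) / (a * T)) * E
          = f * (Q * E) - (Q - 1) / (a * T) * E - Q * E + (P - 1) / (a * T) * E := by ring
      have hAE : |(f * Q - (Q - 1) / (a * T) - Q + (P - 1) / (a * T)) * E| ≤ 2 + 2 / a := by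
        rw [hAEeq, abs_le]
        constructor
        · have hfQE : 0 ≤ f * (Q * E) := by positivity
          have h1a : 0 < 1 / a := by positivity
          have h2a : 2 / a = 2 * (1 / a) := by ring
          linarith
        · have hfQE : f * (Q * E) ≤ 1 := by nlinarith [hf0, hf1, hQE, hQE0]
          have h1a : 0 < 1 / a := by positivity
          have h2a : 2 / a = 2 * (1 / a) := by ring
          linarith
      -- bound on the last factor
      have hPQE0 : 0 ≤ (P - Q) * E := mul_nonneg (by linarith) hE0.le
      have hPQE1 : (P - Q) * E ≤ 1 := by nlinarith [hPE, hQE0]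
      -- bound on (L-R)/(1-f)
      have hLR : 0 < L - R := by linarith
      have hdiv : (L - R) / (1 - f) ≤ (L - R) * (mu * T) / (1 - Real.exp (-mu)) := by
        have hlow : 0 < (1 - Real.exp (-mu)) / (mu * T) := by positivity
        have := div_le_div_of_nonneg_left hLR.le hlow hflb
        calc (L - R) / (1 - f) ≤ (L - R) / ((1 - Real.exp (-mu)) / (mu * T)) := this
          _ = (L - R) * (mu * T) / (1 - Real.exp (-mu)) := by
              rw [div_div_eq_mul_div]
      -- assemble
      have hBle : |(-((L - R) / (1 - f)) *
            ((f * Q - (Q - 1) / (a * T) - Q + (P - 1) / (a * T)) * E)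
          + L * ((P - Q) * E))| ≤ C * T + |L| := by
        have htri := abs_add_le (-((L - R) / (1 - f)) *
            ((f * Q - (Q - 1) / (a * T) - Q + (P - 1) / (a * T)) * E)) (L * ((P - Q) * E))
        have habs1 : |(-((L - R) / (1 - f)) *
              ((f * Q - (Q - 1) / (a * T) - Q + (P - 1) / (a * T)) * E))|
            = (L - R) / (1 - f) * |(f * Q - (Q - 1) / (a * T) - Q + (P - 1) / (a * T)) * E| := by
          rw [abs_mul, abs_neg, abs_of_nonneg (by positivity : (0:ℝ) ≤ (L - R) / (1 - f))]
        have habs2 : |L * ((P - Q) * E)| ≤ |L| := by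
          rw [abs_mul, abs_of_nonneg hPQE0]
          calc |L| * ((P - Q) * E) ≤ |L| * 1 :=
                mul_le_mul_of_nonneg_left hPQE1 (abs_nonneg L)
            _ = |L| := mul_one _
        have hterm1 : (L - R) / (1 - f) *
              |(f * Q - (Q - 1) / (a * T) - Q + (P - 1) / (a * T)) * E|
            ≤ (L - R) * (mu * T) / (1 - Real.exp (-mu)) * (2 + 2 / a) := by
          apply mul_le_mul hdiv hAE (abs_nonneg _) (by positivity)
        have hCeq : (L - R) * (mu * T) / (1 - Real.exp (-mu)) * (2 + 2 / a) = C * T := by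
          rw [hC]; ring
        calc |(-((L - R) / (1 - f)) *
              ((f * Q - (Q - 1) / (a * T) - Q + (P - 1) / (a * T)) * E)
            + L * ((P - Q) * E))| ≤ _ + _ := htri
          _ ≤ (L - R) * (mu * T) / (1 - Real.exp (-mu)) * (2 + 2 / a) + |L| := by
              rw [habs1]; exact add_le_add hterm1 habs2
          _ = C * T + |L| := by rw [hCeq]
      -- final norm bound
      have he1 : Real.exp (-(lam * T * y)) ≤ 1 := by
        apply Real.exp_le_one_iff.mpr
        nlinarith [mul_pos (mul_pos hlam hT0) hy0]
      rw [Real.norm_eq_abs, abs_mul, abs_mul, Real.abs_exp, Real.abs_exp]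
      have hb2 : Real.exp (-r * T) * |(-((L - R) / (1 - f)) *
            ((f * Q - (Q - 1) / (a * T) - Q + (P - 1) / (a * T)) * E)
          + L * ((P - Q) * E))| ≤ Real.exp (-r * T) * (C * T + |L|) :=
        mul_le_mul_of_nonneg_left hBle (Real.exp_pos _).le
      calc Real.exp (-(lam * T * y)) * (Real.exp (-r * T) * |(-((L - R) / (1 - f)) *
            ((f * Q - (Q - 1) / (a * T) - Q + (P - 1) / (a * T)) * E)
          + L * ((P - Q) * E))|)
          ≤ 1 * (Real.exp (-r * T) * |(-((L - R) / (1 - f)) *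
            ((f * Q - (Q - 1) / (a * T) - Q + (P - 1) / (a * T)) * E)
          + L * ((P - Q) * E))|) :=
            mul_le_mul_of_nonneg_right he1 (by positivity)
        _ = _ := one_mul _
        _ ≤ Real.exp (-r * T) * (C * T + |L|) := hb2
  have := hA.add hB
  simpa using this
end

section
/- Let λ > 0, μ > 0, r > 0, γ > 0, and p_min ≤ R ≤ L < p_max. With x = (L − R)/(p_max − p_min), y = (p_max − L)/(p_max − p_min), w(T) = (1 − e^{−λTy}) ((p_max + L)/2) (λy/(λy + r)) + e^{−λTy} u(T, λx, μ, R, L, r) for T > 0, define the expected utility z(T) = e^{−γT} w(T) for T > 0 and z(0) = 0. Then z extends to a continuous function on [0, ∞) with z(T) → 0 as T → ∞, and consequently there exists T* ∈ [0, ∞) such that z(T*) ≥ z(T) for all T ≥ 0; i.e., the expected utility attains a global maximum, so an optimal waiting time exists. -/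
/-!
With `s(T) = ∫₀ᵀ e^{-μt} dt = T (1 - f(T, μ))` the closed form collapses to
`u(T) = e^{-rT} ũ(λ s(T))`, where
`ũ(a) = (p_max - p_min) (e^{-a} - (1 - e^{-a}) / a) + p_max (1 - e^{-a})`
has a removable singularity at `a = 0` with limit `0`. Since `s(T) → 0⁺` as `T → 0⁺`, `u` and
hence `w` tend to `0 = z(0)`, so `z` is continuous on `[0, ∞)`. Since `s(T) → 1/μ` as `T → ∞`,
`u → 0`, `w` converges and the factor `e^{-γT}` drives `z` to `0`. A continuous function on
`[0, ∞)` whose limit at infinity does not exceed its value at `0` attains its maximum: either it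
never exceeds that limit, or it does at some `T₀` and then stays below `z(T₀)` off a compact set.
-/

open Real Filter

/-- The expected discounted payoff `w(T)` in the public list price model. -/
noncomputable def wAux (lam mu r pmin pmax R L : ℝ) (T : ℝ) : ℝ :=
  (1 - Real.exp (-(lam * T * ((pmax - L) / (pmax - pmin))))) * ((pmax + L) / 2)
      * (lam * ((pmax - L) / (pmax - pmin))
          / (lam * ((pmax - L) / (pmax - pmin)) + r))
    + Real.exp (-(lam * T * ((pmax - L) / (pmax - pmin))))
        * uAux T (lam * ((L - R) / (pmax - pmin))) mu R L r

open Set Topology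

/-- `∫₀ᵀ e^{-μt} dt`, so that `T (1 - f(T, μ)) = expDecayIntegral μ T` for `T ≠ 0`. -/
noncomputable def expDecayIntegral (mu T : ℝ) : ℝ := (1 - exp (-mu * T)) / mu

/-- `e^{rT} u(T)` in terms of `a = λ ∫₀ᵀ e^{-μt} dt`; the value at `a = 0` is junk. -/
noncomputable def reducedPayoff (pmin pmax a : ℝ) : ℝ :=
  (pmax - pmin) * (exp (-a) - (1 - exp (-a)) / a) + pmax * (1 - exp (-a))

theorem tendsto_one_sub_exp_neg_div :
    Tendsto (fun a => (1 - exp (-a)) / a) (𝓝[≠] 0) (𝓝 1) := by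
  have h : HasDerivAt (fun a => -exp (-a)) 1 0 := by
    simpa using ((hasDerivAt_neg (0 : ℝ)).exp).fun_neg
  refine h.tendsto_slope_zero.congr fun a => ?_
  simp only [zero_add, neg_zero, exp_zero, smul_eq_mul]
  ring

theorem continuousOn_reducedPayoff (pmin pmax : ℝ) :
    ContinuousOn (reducedPayoff pmin pmax) {0}ᶜ := by
  have : ∀ a ∈ ({0}ᶜ : Set ℝ), a ≠ 0 := fun _ => id
  unfold reducedPayoff
  fun_prop (disch := assumption)

theorem tendsto_reducedPayoff_zero (pmin pmax : ℝ) :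
    Tendsto (reducedPayoff pmin pmax) (𝓝[≠] 0) (𝓝 0) := by
  have hexp : Tendsto (fun a : ℝ => exp (-a)) (𝓝[≠] 0) (𝓝 1) := by
    simpa using ((by fun_prop : Continuous fun a : ℝ => exp (-a)).tendsto 0).mono_left
      nhdsWithin_le_nhds
  unfold reducedPayoff
  simpa using ((hexp.sub tendsto_one_sub_exp_neg_div).const_mul (pmax - pmin)).add
    ((tendsto_const_nhds (x := (1 : ℝ)).sub hexp).const_mul pmax)

theorem tendsto_exp_neg_mul_atTop {c : ℝ} (hc : 0 < c) :
    Tendsto (fun T => exp (-c * T)) atTop (𝓝 0) :=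
  tendsto_exp_atBot.comp (tendsto_id.const_mul_atTop_of_neg (neg_neg_of_pos hc))

theorem tendsto_exp_mul_nhdsGT_zero (c : ℝ) :
    Tendsto (fun T => exp (c * T)) (𝓝[>] 0) (𝓝 1) := by
  simpa using ((by fun_prop : Continuous fun T => exp (c * T)).tendsto 0).mono_left
    nhdsWithin_le_nhds

theorem continuousOn_Ici_of_eqOn_Ioi {α β : Type*} [TopologicalSpace α] [LinearOrder α]
    [OrderTopology α] [TopologicalSpace β] {f g : α → β} {a : α} (hg : ContinuousOn g (Ioi a))
    (hga : Tendsto g (𝓝[>] a) (𝓝 (f a))) (hfg : EqOn f g (Ioi a)) : ContinuousOn f (Ici a) := by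
  rintro x (hx : a ≤ x)
  rcases hx.eq_or_lt with rfl | hx
  · refine continuousWithinAt_Ioi_iff_Ici.1 (hga.congr' ?_)
    exact (hfg.eventuallyEq_of_mem self_mem_nhdsWithin).symm
  · exact ((hg.continuousAt (Ioi_mem_nhds hx)).congr
      (hfg.symm.eventuallyEq_of_mem (Ioi_mem_nhds hx))).continuousWithinAt

theorem exists_isMaxOn_Ici_of_tendsto_atTop {α : Type*} [TopologicalSpace α] [LinearOrder α]
    [OrderClosedTopology α] {f : ℝ → α} {a : ℝ} {l : α} (hf : ContinuousOn f (Ici a))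
    (hl : Tendsto f atTop (𝓝 l)) (ha : l ≤ f a) : ∃ x ∈ Ici a, IsMaxOn f (Ici a) x := by
  by_cases! h : ∀ x ∈ Ici a, f x ≤ l
  · exact ⟨a, le_refl a, fun x hx => (h x hx).trans ha⟩
  obtain ⟨x₀, hx₀, hlt⟩ := h
  refine hf.exists_isMaxOn' isClosed_Ici hx₀ ?_
  rw [cocompact_eq_atBot_atTop, inf_sup_right, (disjoint_atBot_principal_Ici a).eq_bot,
    bot_sup_eq]
  exact ((hl.eventually_lt_const hlt).mono fun _ => le_of_lt).filter_mono inf_le_left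

section expDecayIntegral

variable {mu : ℝ}

theorem expDecayIntegral_pos (hmu : 0 < mu) {T : ℝ} (hT : 0 < T) :
    0 < expDecayIntegral mu T :=
  div_pos (sub_pos.2 (exp_lt_one_iff.2 (by nlinarith))) hmu

theorem continuous_expDecayIntegral (mu : ℝ) : Continuous (expDecayIntegral mu) := by
  unfold expDecayIntegral
  fun_prop

theorem tendsto_expDecayIntegral_atTop (hmu : 0 < mu) :
    Tendsto (expDecayIntegral mu) atTop (𝓝 mu⁻¹) := by
  unfold expDecayIntegral
  simpa using
    (tendsto_const_nhds (x := (1 : ℝ)).sub (tendsto_exp_neg_mul_atTop hmu)).div_const mu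

end expDecayIntegral

theorem uAux_eqOn_reducedPayoff {lam mu : ℝ} (pmin pmax r : ℝ) (hlam : lam ≠ 0) (hmu : 0 < mu) :
    EqOn (fun T => uAux T lam mu pmin pmax r)
      (fun T => exp (-r * T) * reducedPayoff pmin pmax (lam * expDecayIntegral mu T))
      (Ioi 0) := by
  intro T (hT : 0 < T)
  have hs := expDecayIntegral_pos hmu hT
  have hf : fAux T mu = 1 - expDecayIntegral mu T / T := by
    rw [fAux, expDecayIntegral]
    field_simp
  have hexp :
      exp (lam * T * fAux T mu) = exp (lam * T) * exp (-(lam * expDecayIntegral mu T)) := by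
    rw [hf, ← exp_add]
    congr 1
    field_simp
    ring
  dsimp only
  rw [uAux, gAux, hexp, hf, sub_sub_cancel]
  simp only [reducedPayoff, neg_mul, exp_neg]
  field_simp
  ring

section uAux

variable {lam mu : ℝ} (pmin pmax r : ℝ)

theorem continuousOn_uAux (hlam : 0 < lam) (hmu : 0 < mu) :
    ContinuousOn (fun T => uAux T lam mu pmin pmax r) (Ioi 0) := by
  refine ContinuousOn.congr ?_ (uAux_eqOn_reducedPayoff pmin pmax r hlam.ne' hmu)
  refine (by fun_prop : Continuous fun T => exp (-r * T)).continuousOn.mul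
    ((continuousOn_reducedPayoff pmin pmax).comp
      (continuous_const.mul (continuous_expDecayIntegral mu)).continuousOn ?_)
  exact fun T hT => (mul_pos hlam (expDecayIntegral_pos hmu hT)).ne'

theorem tendsto_uAux_nhdsGT_zero (hlam : 0 < lam) (hmu : 0 < mu) :
    Tendsto (fun T => uAux T lam mu pmin pmax r) (𝓝[>] 0) (𝓝 0) := by
  have ha : Tendsto (fun T => lam * expDecayIntegral mu T) (𝓝[>] 0) (𝓝[≠] 0) := by
    refine tendsto_nhdsWithin_iff.2 ⟨?_, eventually_mem_nhdsWithin.mono fun _ hT =>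
      (mul_pos hlam (expDecayIntegral_pos hmu hT)).ne'⟩
    simpa [expDecayIntegral] using
      (((continuous_expDecayIntegral mu).tendsto 0).const_mul lam).mono_left nhdsWithin_le_nhds
  refine Tendsto.congr' (EqOn.eventuallyEq_of_mem (uAux_eqOn_reducedPayoff pmin pmax r hlam.ne' hmu)
    self_mem_nhdsWithin).symm ?_
  simpa using
    (tendsto_exp_mul_nhdsGT_zero (-r)).mul ((tendsto_reducedPayoff_zero pmin pmax).comp ha)

theorem tendsto_uAux_atTop (hlam : 0 < lam) (hmu : 0 < mu) (hr : 0 < r) :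
    Tendsto (fun T => uAux T lam mu pmin pmax r) atTop (𝓝 0) := by
  have ha : Tendsto (fun T => lam * expDecayIntegral mu T) atTop (𝓝 (lam * mu⁻¹)) :=
    (tendsto_expDecayIntegral_atTop hmu).const_mul lam
  have hpay := ((continuousOn_reducedPayoff pmin pmax).continuousAt
    (isOpen_compl_singleton.mem_nhds (mul_pos hlam (inv_pos.2 hmu)).ne')).tendsto.comp ha
  refine Tendsto.congr' (EqOn.eventuallyEq_of_mem (uAux_eqOn_reducedPayoff pmin pmax r hlam.ne' hmu)
    (Ioi_mem_atTop 0)).symm ?_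
  simpa using (tendsto_exp_neg_mul_atTop hr).mul hpay

end uAux

theorem uAux_zero_self (T mu p r : ℝ) : uAux T 0 mu p p r = 0 := by
  simp [uAux]

section wAux

variable {lam mu r pmin pmax R L : ℝ}

theorem continuousOn_wAux
    (hu : ContinuousOn (fun T => uAux T (lam * ((L - R) / (pmax - pmin))) mu R L r) (Ioi 0)) :
    ContinuousOn (wAux lam mu r pmin pmax R L) (Ioi 0) := by
  unfold wAux
  fun_prop

theorem tendsto_wAux_nhdsGT_zero
    (hu : Tendsto (fun T => uAux T (lam * ((L - R) / (pmax - pmin))) mu R L r) (𝓝[>] 0) (𝓝 0)) :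
    Tendsto (wAux lam mu r pmin pmax R L) (𝓝[>] 0) (𝓝 0) := by
  have he : Tendsto (fun T => exp (-(lam * T * ((pmax - L) / (pmax - pmin)))))
      (𝓝[>] 0) (𝓝 1) := by
    refine (tendsto_exp_mul_nhdsGT_zero (-(lam * ((pmax - L) / (pmax - pmin))))).congr
      fun T => ?_
    ring_nf
  unfold wAux
  simpa using
    (((tendsto_const_nhds (x := (1 : ℝ)).sub he).mul_const _).mul_const _).add (he.mul hu)

theorem tendsto_wAux_atTop (hy : 0 < lam * ((pmax - L) / (pmax - pmin)))
    (hu : Tendsto (fun T => uAux T (lam * ((L - R) / (pmax - pmin))) mu R L r) atTop (𝓝 0)) :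
    Tendsto (wAux lam mu r pmin pmax R L) atTop
      (𝓝 ((pmax + L) / 2 * (lam * ((pmax - L) / (pmax - pmin))
          / (lam * ((pmax - L) / (pmax - pmin)) + r)))) := by
  have he : Tendsto (fun T => exp (-(lam * T * ((pmax - L) / (pmax - pmin))))) atTop (𝓝 0) := by
    refine (tendsto_exp_neg_mul_atTop hy).congr fun T => ?_
    ring_nf
  unfold wAux
  simpa using
    (((tendsto_const_nhds (x := (1 : ℝ)).sub he).mul_const _).mul_const _).add (he.mul hu)

end wAux

/-- The expected utility `z(T) = e^{−γT} w(T)` (with `z(0) = 0`) is continuous on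
`[0, ∞)`, tends to `0` at infinity, and hence attains a global maximum: an optimal
waiting time exists. -/
theorem optimal_waiting_time_exists
    (lam mu r gamma pmin pmax R L : ℝ)
    (hlam : 0 < lam) (hmu : 0 < mu) (hr : 0 < r) (hgamma : 0 < gamma)
    (h1 : pmin ≤ R) (h2 : R ≤ L) (h3 : L < pmax)
    (z : ℝ → ℝ)
    (hz : ∀ T : ℝ, 0 < T → z T = Real.exp (-gamma * T) * wAux lam mu r pmin pmax R L T)
    (hz0 : z 0 = 0) :
    ContinuousOn z (Set.Ici 0) ∧ Tendsto z atTop (nhds 0) ∧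
      ∃ Tstar : ℝ, 0 ≤ Tstar ∧ ∀ T : ℝ, 0 ≤ T → z T ≤ z Tstar := by
  have hspread : 0 < pmax - pmin := by linarith
  obtain ⟨hu_cont, hu_zero, hu_top⟩ :
      ContinuousOn (fun T => uAux T (lam * ((L - R) / (pmax - pmin))) mu R L r) (Ioi 0) ∧
      Tendsto (fun T => uAux T (lam * ((L - R) / (pmax - pmin))) mu R L r) (𝓝[>] 0) (𝓝 0) ∧
      Tendsto (fun T => uAux T (lam * ((L - R) / (pmax - pmin))) mu R L r) atTop (𝓝 0) := by
    rcases h2.eq_or_lt with rfl | hRL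
    · simp only [sub_self, zero_div, mul_zero, uAux_zero_self]
      exact ⟨continuousOn_const, tendsto_const_nhds, tendsto_const_nhds⟩
    · have hx : 0 < lam * ((L - R) / (pmax - pmin)) :=
        mul_pos hlam (div_pos (by linarith) hspread)
      exact ⟨continuousOn_uAux R L r hx hmu, tendsto_uAux_nhdsGT_zero R L r hx hmu,
        tendsto_uAux_atTop R L r hx hmu hr⟩
  have hy : 0 < lam * ((pmax - L) / (pmax - pmin)) :=
    mul_pos hlam (div_pos (by linarith) hspread)
  have hcont : ContinuousOn z (Ici 0) := by
    refine continuousOn_Ici_of_eqOn_Ioi ?_ ?_ hz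
    · exact (by fun_prop : Continuous fun T => exp (-gamma * T)).continuousOn.mul
        (continuousOn_wAux hu_cont)
    · simpa [hz0] using
        (tendsto_exp_mul_nhdsGT_zero (-gamma)).mul (tendsto_wAux_nhdsGT_zero hu_zero)
  have htop : Tendsto z atTop (𝓝 0) := by
    refine Tendsto.congr' (EqOn.eventuallyEq_of_mem hz (Ioi_mem_atTop 0)).symm ?_
    simpa using (tendsto_exp_neg_mul_atTop hgamma).mul (tendsto_wAux_atTop hy hu_top)
  obtain ⟨Tstar, hTstar, hmax⟩ := exists_isMaxOn_Ici_of_tendsto_atTop hcont htop hz0.ge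
  exact ⟨hcont, htop, Tstar, hTstar, fun T hT => hmax hT⟩
end

section
/- Let t > 0, let λ : [0, t] → [0, ∞) be integrable with Λ(t) = ∫_0^t λ(a) da > 0, let R > 0 and let L : [0, t] → ℝ be measurable with R ≤ L(a) ≤ L_0 for all a. Let (A_i, ξ_i, τ_i), 1 ≤ i ≤ n, be i.i.d. triples of mutually independent components, where A_i has density a ↦ λ(a)/Λ(t) on [0, t], ξ_i has continuous cumulative distribution function F_ξ, and τ_i ≥ 0 has continuous cumulative distribution function F_τ. Assume φ(t) = (1/Λ(t)) ∫_0^t λ(a) F_ξ(L(a)) da > 0. Let M = max_{1 ≤ i ≤ n} ξ_i · 1{ξ_i ≥ R} · 1{τ_i ≥ t − A_i}. Then for every y > 0, P( M > y | ξ_i < L(A_i) for all 1 ≤ i ≤ n ) = 1 − ( 1 − ψ(t, y)/φ(t) )^n, where ψ(t, y) = (1/Λ(t)) ∫_0^t λ(a) (1 − F_τ(t − a)) ( F_ξ( max(L(a), y) ) − F_ξ( max(R, y) ) ) da. -/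
/-!
The offers are independent. Let `E` be the event that a single offer is below the list price and
`G` the event that it is available above `y`; then `M > y` iff some offer lies in `G`, so

  `P(M > y, β > t) = P(all offers in E) - P(all offers in E \ G) = φⁿ - (φ - ψ)ⁿ`,

and dividing by `P(β > t) = φⁿ` gives the formula. The single-offer probabilities `φ` and `ψ` are
integrals over the arrival time `a`: given `A = a`, the offer value and the withdrawal delay are
independent, so the probability factorises into a difference of values of `F_ξ` times
`1 - F_τ(t - a)`.
-/

open MeasureTheory ProbabilityTheory Set

namespace ProbabilityTheory

section ContinuousCDF

variable {μ : Measure ℝ}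

lemma leftLim_cdf_of_continuous (hμ : Continuous (cdf μ)) (x : ℝ) :
    Function.leftLim (cdf μ) x = cdf μ x :=
  (monotone_cdf μ).continuousWithinAt_Iio_iff_leftLim_eq.mp hμ.continuousWithinAt

variable [IsProbabilityMeasure μ]

lemma measureReal_Iio_of_continuous_cdf (hμ : Continuous (cdf μ)) (x : ℝ) :
    μ.real (Iio x) = cdf μ x := by
  conv_lhs => rw [← measure_cdf μ]
  rw [measureReal_def, StieltjesFunction.measure_Iio _ (tendsto_cdf_atBot μ),
    leftLim_cdf_of_continuous hμ, sub_zero, ENNReal.toReal_ofReal (cdf_nonneg μ x)]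

lemma measureReal_Ici_of_continuous_cdf (hμ : Continuous (cdf μ)) (x : ℝ) :
    μ.real (Ici x) = 1 - cdf μ x := by
  conv_lhs => rw [← measure_cdf μ]
  rw [measureReal_def, StieltjesFunction.measure_Ici _ (tendsto_cdf_atTop μ),
    leftLim_cdf_of_continuous hμ, ENNReal.toReal_ofReal (sub_nonneg.2 (cdf_le_one μ x))]

lemma measure_Ioo_of_continuous_cdf (hμ : Continuous (cdf μ)) (a b : ℝ) :
    μ (Ioo a b) = ENNReal.ofReal (cdf μ b - cdf μ a) := by
  conv_lhs => rw [← measure_cdf μ]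
  rw [StieltjesFunction.measure_Ioo, leftLim_cdf_of_continuous hμ]

lemma measure_Icc_of_continuous_cdf (hμ : Continuous (cdf μ)) (a b : ℝ) :
    μ (Icc a b) = ENNReal.ofReal (cdf μ b - cdf μ a) := by
  conv_lhs => rw [← measure_cdf μ]
  rw [StieltjesFunction.measure_Icc, leftLim_cdf_of_continuous hμ]

/-- The set lies between `Ioo (max R y) (max c y)` and `Icc (max R y) (max c y)`, which have the
same measure since `μ` has no atoms. -/
lemma measureReal_band_of_continuous_cdf (hμ : Continuous (cdf μ)) {R y c : ℝ} (hRc : R ≤ c) :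
    μ.real {x | R ≤ x ∧ y < x ∧ x < c} = cdf μ (max c y) - cdf μ (max R y) := by
  have hIoo : Ioo (max R y) (max c y) ⊆ {x | R ≤ x ∧ y < x ∧ x < c} := by
    intro x ⟨hlo, hhi⟩
    rw [max_lt_iff] at hlo
    refine ⟨hlo.1.le, hlo.2, ?_⟩
    rcases le_total y c with h | h
    · rwa [max_eq_left h] at hhi
    · rw [max_eq_right h] at hhi; linarith
  have hIcc : {x | R ≤ x ∧ y < x ∧ x < c} ⊆ Icc (max R y) (max c y) :=
    fun x ⟨hR, hy, hc⟩ => ⟨max_le hR hy.le, hc.le.trans (le_max_left c y)⟩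
  have hmono : cdf μ (max R y) ≤ cdf μ (max c y) := monotone_cdf μ (max_le_max_right y hRc)
  rw [measureReal_def,
    le_antisymm ((measure_mono hIcc).trans_eq (measure_Icc_of_continuous_cdf hμ _ _))
      ((measure_Ioo_of_continuous_cdf hμ _ _).symm.trans_le (measure_mono hIoo)),
    ENNReal.toReal_ofReal (sub_nonneg.2 hmono)]

end ContinuousCDF

variable {Ω β : Type*} {mΩ : MeasurableSpace Ω} {μ : Measure Ω} [IsProbabilityMeasure μ]

lemma cdf_map_eq {X : Ω → ℝ} (hX : Measurable X) {F : ℝ → ℝ}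
    (hF : ∀ x, F x = (μ {ω | X ω ≤ x}).toReal) : ⇑(cdf (μ.map X)) = F := by
  have : IsProbabilityMeasure (μ.map X) := Measure.isProbabilityMeasure_map hX.aemeasurable
  ext x
  rw [cdf_eq_real, map_measureReal_apply hX measurableSet_Iic, hF]
  rfl

variable [MeasurableSpace β]

section Triple

variable {A ξ τ : Ω → β}

lemma map_triple_eq_prod_of_iIndepFun (hA : Measurable A) (hξ : Measurable ξ)
    (hτ : Measurable τ) (h : iIndepFun ![A, ξ, τ] μ) :
    μ.map (fun ω => (A ω, ξ ω, τ ω)) = (μ.map A).prod ((μ.map ξ).prod (μ.map τ)) := by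
  have hmeas : ∀ i, Measurable (![A, ξ, τ] i) := by
    intro i; fin_cases i <;> assumption
  have hξτ : IndepFun ξ τ μ := h.indepFun (by decide : (1 : Fin 3) ≠ 2)
  have hA_ξτ : IndepFun A (fun ω => (ξ ω, τ ω)) μ :=
    (h.indepFun_prodMk hmeas 1 2 0 (by decide) (by decide)).symm
  rw [(indepFun_iff_map_prod_eq_prod_map_map hA.aemeasurable
      (hξ.prodMk hτ).aemeasurable).mp hA_ξτ,
    (indepFun_iff_map_prod_eq_prod_map_map hξ.aemeasurable hτ.aemeasurable).mp hξτ]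

lemma measureReal_preimage_triple_of_iIndepFun (hA : Measurable A) (hξ : Measurable ξ)
    (hτ : Measurable τ) (h : iIndepFun ![A, ξ, τ] μ) {S : Set (β × β × β)}
    (hS : MeasurableSet S) :
    μ.real ((fun ω => (A ω, ξ ω, τ ω)) ⁻¹' S)
      = ∫ a, ((μ.map ξ).prod (μ.map τ)).real (Prod.mk a ⁻¹' S) ∂(μ.map A) := by
  have : IsProbabilityMeasure (μ.map ξ) := Measure.isProbabilityMeasure_map hξ.aemeasurable
  have : IsProbabilityMeasure (μ.map τ) := Measure.isProbabilityMeasure_map hτ.aemeasurable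
  rw [← map_measureReal_apply (hA.prodMk (hξ.prodMk hτ)) hS,
    map_triple_eq_prod_of_iIndepFun hA hξ hτ h, measureReal_def, Measure.prod_apply hS,
    ← integral_toReal (measurable_measure_prodMk_left hS).aemeasurable
      (.of_forall fun _ => measure_lt_top _ _)]
  rfl

end Triple

section Conditioning

variable {ι : Type*} [Fintype ι] {X : ι → Ω → β} {E G : Set β}

omit [IsProbabilityMeasure μ] in
lemma iIndepFun.measureReal_setOf_forall_mem (h : iIndepFun X μ) (hE : MeasurableSet E) :
    μ.real {ω | ∀ i, X i ω ∈ E} = ∏ i, μ.real (X i ⁻¹' E) := by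
  rw [show {ω | ∀ i, X i ω ∈ E} = ⋂ i, X i ⁻¹' E by ext; simp, measureReal_def,
    h.meas_iInter fun i => ⟨E, hE, rfl⟩, ENNReal.toReal_prod]
  rfl

theorem iIndepFun.cond_exists_mem_of_forall_mem (h : iIndepFun X μ) (hX : ∀ i, Measurable (X i))
    (hE : MeasurableSet E) (hG : MeasurableSet G) {p q : ℝ}
    (hp : ∀ i, μ.real (X i ⁻¹' E) = p) (hq : ∀ i, μ.real (X i ⁻¹' (E ∩ G)) = q) (hp0 : p ≠ 0) :
    (μ[|{ω | ∀ i, X i ω ∈ E}]).real {ω | ∃ i, X i ω ∈ G}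
      = 1 - (1 - q / p) ^ Fintype.card ι := by
  set C := {ω | ∀ i, X i ω ∈ E}
  set B := {ω | ∃ i, X i ω ∈ G}
  have hC : MeasurableSet C := by
    rw [show C = ⋂ i, X i ⁻¹' E by ext; simp [C]]
    exact .iInter fun i => hX i hE
  have hB : MeasurableSet B := by
    rw [show B = ⋃ i, X i ⁻¹' G by ext; simp [B]]
    exact .iUnion fun i => hX i hG
  have hPC : μ.real C = p ^ Fintype.card ι := by
    simp [C, h.measureReal_setOf_forall_mem hE, hp]
  have hPC_diff : μ.real (C \ B) = (p - q) ^ Fintype.card ι := by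
    have hdiff : ∀ i, μ.real (X i ⁻¹' (E \ G)) = p - q := fun i => by
      rw [← hp i, ← hq i, ← measureReal_inter_add_sdiff (s := X i ⁻¹' E) (hX i hG)]
      simp [preimage_inter, preimage_sdiff]
    have : C \ B = {ω | ∀ i, X i ω ∈ E \ G} := by
      ext; simp [C, B, forall_and]
    rw [this, h.measureReal_setOf_forall_mem (hE.diff hG)]
    simp only [hdiff, Finset.prod_const, Finset.card_univ]
  have hPC_inter : μ.real (C ∩ B) = p ^ Fintype.card ι - (p - q) ^ Fintype.card ι := by
    linarith [measureReal_sdiff_add_inter (μ := μ) (s := C) hB]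
  rw [measureReal_def, cond_apply hC, ENNReal.toReal_mul, ENNReal.toReal_inv, ← measureReal_def,
    ← measureReal_def, hPC, hPC_inter, one_sub_div hp0, div_pow]
  field_simp

end Conditioning

end ProbabilityTheory

lemma integral_withDensity_Icc {t Λ : ℝ} (ht : 0 ≤ t) (hΛ : 0 ≤ Λ) {l : ℝ → ℝ}
    (hl : AEMeasurable l (volume.restrict (Icc 0 t))) (hl0 : ∀ a ∈ Icc 0 t, 0 ≤ l a)
    (g : ℝ → ℝ) :
    ∫ a, g a ∂(volume.restrict (Icc 0 t)).withDensity (fun a => ENNReal.ofReal (l a / Λ))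
      = 1 / Λ * ∫ a in 0..t, l a * g a := by
  rw [integral_withDensity_eq_integral_toReal_smul₀ (hl.div_const Λ).ennreal_ofReal
      (.of_forall fun _ => ENNReal.ofReal_lt_top),
    intervalIntegral.integral_of_le ht, ← integral_Icc_eq_integral_Ioc, ← integral_const_mul]
  refine setIntegral_congr_fun measurableSet_Icc fun a ha => ?_
  rw [ENNReal.toReal_ofReal (div_nonneg (hl0 a ha) hΛ), smul_eq_mul]
  ring

section Offers

/- A point `(a, x, w)` of `ℝ × ℝ × ℝ` is an offer of value `x` arriving at time `a` and staying open
for a duration `w`. -/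

def belowList (L : ℝ → ℝ) : Set (ℝ × ℝ × ℝ) := {p | p.2.1 < L p.1}

def availableAbove (t R y : ℝ) : Set (ℝ × ℝ × ℝ) := {p | y < p.2.1 ∧ R ≤ p.2.1 ∧ t - p.1 ≤ p.2.2}

lemma measurableSet_belowList {L : ℝ → ℝ} (hL : Measurable L) : MeasurableSet (belowList L) :=
  measurableSet_lt measurable_snd.fst (hL.comp measurable_fst)

lemma measurableSet_availableAbove {t R y : ℝ} : MeasurableSet (availableAbove t R y) :=
  (measurableSet_lt measurable_const measurable_snd.fst).inter
    ((measurableSet_le measurable_const measurable_snd.fst).inter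
      (measurableSet_le (measurable_const.sub measurable_fst) measurable_snd.snd))

variable {μ ν : Measure ℝ} [IsProbabilityMeasure μ] [IsProbabilityMeasure ν]

lemma measureReal_prod_preimage_mk_belowList (hμ : Continuous (cdf μ)) (L : ℝ → ℝ) (a : ℝ) :
    (μ.prod ν).real (Prod.mk a ⁻¹' belowList L) = cdf μ (L a) := by
  rw [show Prod.mk a ⁻¹' belowList L = Iio (L a) ×ˢ univ by ext; simp [belowList],
    measureReal_prod_prod, measureReal_Iio_of_continuous_cdf hμ, probReal_univ, mul_one]

lemma measureReal_prod_preimage_mk_belowList_inter_availableAbove (hμ : Continuous (cdf μ))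
    (hν : Continuous (cdf ν)) {L : ℝ → ℝ} {t R y a : ℝ} (hRL : R ≤ L a) :
    (μ.prod ν).real (Prod.mk a ⁻¹' (belowList L ∩ availableAbove t R y))
      = (cdf μ (max (L a) y) - cdf μ (max R y)) * (1 - cdf ν (t - a)) := by
  rw [show Prod.mk a ⁻¹' (belowList L ∩ availableAbove t R y)
      = {x | R ≤ x ∧ y < x ∧ x < L a} ×ˢ Ici (t - a) by
        ext; simp [belowList, availableAbove]; tauto,
    measureReal_prod_prod, measureReal_band_of_continuous_cdf hμ hRL,
    measureReal_Ici_of_continuous_cdf hν]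

end Offers

lemma setOf_lt_sup'_eq_setOf_exists_availableAbove {Ω ι : Type*} [Fintype ι]
    (hne : (Finset.univ : Finset ι).Nonempty) {t R y : ℝ} (hy : 0 ≤ y) (A ξ τ : ι → Ω → ℝ) :
    {ω | y < Finset.univ.sup' hne (fun i => ξ i ω * (if R ≤ ξ i ω then (1:ℝ) else 0)
        * (if t - A i ω ≤ τ i ω then (1:ℝ) else 0))}
      = {ω | ∃ i, (A i ω, ξ i ω, τ i ω) ∈ availableAbove t R y} := by
  ext ω
  simp only [mem_ofPred_eq, Finset.lt_sup'_iff, Finset.mem_univ, true_and]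
  refine exists_congr fun i => ?_
  by_cases hR : R ≤ ξ i ω <;> by_cases hw : t - A i ω ≤ τ i ω <;>
    simp only [availableAbove, mem_ofPred_eq, hR, hw, if_true, if_false, mul_one, mul_zero,
      hy.not_gt, and_true, and_false]

theorem conditional_best_offer_tail_general
    {Ω : Type*} [MeasureSpace Ω] [IsProbabilityMeasure (ℙ : Measure Ω)]
    (t : ℝ) (ht : 0 < t)
    (l : ℝ → ℝ) (hl_int : IntegrableOn l (Set.Icc 0 t))
    (hl_nonneg : ∀ a ∈ Set.Icc (0:ℝ) t, 0 ≤ l a)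
    (Lam : ℝ) (hLam_pos : 0 < Lam)
    (R L0 : ℝ)
    (L : ℝ → ℝ) (hL : Measurable L)
    (hLbounds : ∀ a ∈ Set.Icc (0:ℝ) t, R ≤ L a ∧ L a ≤ L0)
    (Fξ : ℝ → ℝ) (hFξ_cont : Continuous Fξ)
    (Fτ : ℝ → ℝ) (hFτ_cont : Continuous Fτ)
    (n : ℕ) (hn : 0 < n)
    (A ξ τ : Fin n → Ω → ℝ)
    (hA : ∀ i, Measurable (A i)) (hξ : ∀ i, Measurable (ξ i)) (hτ : ∀ i, Measurable (τ i))
    (hAlaw : ∀ i, Measure.map (A i) ℙ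
      = (volume.restrict (Set.Icc (0:ℝ) t)).withDensity
          (fun a => ENNReal.ofReal (l a / Lam)))
    (hFξ : ∀ i, ∀ x : ℝ, Fξ x = (ℙ {ω | ξ i ω ≤ x}).toReal)
    (hFτ : ∀ i, ∀ x : ℝ, Fτ x = (ℙ {ω | τ i ω ≤ x}).toReal)
    (hcomp_indep : ∀ i, iIndepFun ![A i, ξ i, τ i] ℙ)
    (hiid : iIndepFun (fun i ω => (A i ω, ξ i ω, τ i ω)) ℙ)
    (phi : ℝ) (hphi : phi = (1 / Lam) * ∫ a in (0:ℝ)..t, l a * Fξ (L a))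
    (hphi_pos : 0 < phi)
    (psi : ℝ → ℝ)
    (hpsi : ∀ y : ℝ, psi y = (1 / Lam) * ∫ a in (0:ℝ)..t,
      l a * (1 - Fτ (t - a)) * (Fξ (max (L a) y) - Fξ (max R y))) :
    ∀ y : ℝ, 0 < y →
      ((ℙ[|{ω | ∀ i, ξ i ω < L (A i ω)}])
          {ω | y < Finset.univ.sup'
              (Finset.univ_nonempty_iff.mpr (Fin.pos_iff_nonempty.mp hn))
              (fun i => ξ i ω * (if R ≤ ξ i ω then (1:ℝ) else 0)
                * (if t - A i ω ≤ τ i ω then (1:ℝ) else 0))}).toReal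
        = 1 - (1 - psi y / phi) ^ n := by
  intro y hy
  have hlaw : ∀ i S, MeasurableSet S →
      (ℙ : Measure Ω).real ((fun ω => (A i ω, ξ i ω, τ i ω)) ⁻¹' S) = 1 / Lam * ∫ a in 0..t,
        l a * ((Measure.map (ξ i) ℙ).prod (Measure.map (τ i) ℙ)).real (Prod.mk a ⁻¹' S) :=
    fun i S hS => by
      rw [measureReal_preimage_triple_of_iIndepFun (hA i) (hξ i) (hτ i) (hcomp_indep i) hS,
        hAlaw i, integral_withDensity_Icc ht.le hLam_pos.le hl_int.aemeasurable hl_nonneg]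
  have hcdfξ i : ⇑(cdf (Measure.map (ξ i) ℙ)) = Fξ := cdf_map_eq (hξ i) (hFξ i)
  have hcdfτ i : ⇑(cdf (Measure.map (τ i) ℙ)) = Fτ := cdf_map_eq (hτ i) (hFτ i)
  have hE i : (ℙ : Measure Ω).real ((fun ω => (A i ω, ξ i ω, τ i ω)) ⁻¹' belowList L) = phi := by
    have := Measure.isProbabilityMeasure_map (μ := ℙ) (hξ i).aemeasurable
    have := Measure.isProbabilityMeasure_map (μ := ℙ) (hτ i).aemeasurable
    rw [hlaw i _ (measurableSet_belowList hL), hphi]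
    simp only [measureReal_prod_preimage_mk_belowList ((hcdfξ i).symm ▸ hFξ_cont), hcdfξ i]
  have hEG i : (ℙ : Measure Ω).real ((fun ω => (A i ω, ξ i ω, τ i ω)) ⁻¹'
      (belowList L ∩ availableAbove t R y)) = psi y := by
    have := Measure.isProbabilityMeasure_map (μ := ℙ) (hξ i).aemeasurable
    have := Measure.isProbabilityMeasure_map (μ := ℙ) (hτ i).aemeasurable
    rw [hlaw i _ ((measurableSet_belowList hL).inter measurableSet_availableAbove), hpsi]
    refine congrArg _ (intervalIntegral.integral_congr fun a ha => ?_)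
    rw [uIcc_of_le ht.le] at ha
    rw [measureReal_prod_preimage_mk_belowList_inter_availableAbove ((hcdfξ i).symm ▸ hFξ_cont)
      ((hcdfτ i).symm ▸ hFτ_cont) (hLbounds a ha).1, hcdfξ i, hcdfτ i]
    ring
  rw [setOf_lt_sup'_eq_setOf_exists_availableAbove _ hy.le]
  have := hiid.cond_exists_mem_of_forall_mem (fun i => (hA i).prodMk ((hξ i).prodMk (hτ i)))
    (measurableSet_belowList hL) measurableSet_availableAbove hE hEG hphi_pos.ne'
  rwa [Fintype.card_fin] at this

/-- Conditional on the event that none of the `n` i.i.d. offers reaches the prevailing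
list price, the best available offer `M` satisfies
`P(M > y | β > t) = 1 − (1 − ψ(t,y)/φ(t))^n` for every `y > 0`. -/
theorem conditional_best_offer_tail
    {Ω : Type*} [MeasureSpace Ω] [IsProbabilityMeasure (ℙ : Measure Ω)]
    (t : ℝ) (ht : 0 < t)
    (l : ℝ → ℝ) (hl_int : IntegrableOn l (Set.Icc 0 t))
    (hl_nonneg : ∀ a ∈ Set.Icc (0:ℝ) t, 0 ≤ l a)
    (Lam : ℝ) (hLam : Lam = ∫ a in (0:ℝ)..t, l a) (hLam_pos : 0 < Lam)
    (R L0 : ℝ) (hR : 0 < R)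
    (L : ℝ → ℝ) (hL : Measurable L)
    (hLbounds : ∀ a ∈ Set.Icc (0:ℝ) t, R ≤ L a ∧ L a ≤ L0)
    (Fξ : ℝ → ℝ) (hFξ_cont : Continuous Fξ)
    (Fτ : ℝ → ℝ) (hFτ_cont : Continuous Fτ)
    (n : ℕ) (hn : 0 < n)
    (A ξ τ : Fin n → Ω → ℝ)
    (hA : ∀ i, Measurable (A i)) (hξ : ∀ i, Measurable (ξ i)) (hτ : ∀ i, Measurable (τ i))
    (hτ_nonneg : ∀ i ω, 0 ≤ τ i ω)
    (hAlaw : ∀ i, Measure.map (A i) ℙ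
      = (volume.restrict (Set.Icc (0:ℝ) t)).withDensity
          (fun a => ENNReal.ofReal (l a / Lam)))
    (hFξ : ∀ i, ∀ x : ℝ, Fξ x = (ℙ {ω | ξ i ω ≤ x}).toReal)
    (hFτ : ∀ i, ∀ x : ℝ, Fτ x = (ℙ {ω | τ i ω ≤ x}).toReal)
    (hcomp_indep : ∀ i, iIndepFun ![A i, ξ i, τ i] ℙ)
    (hiid : iIndepFun (fun i ω => (A i ω, ξ i ω, τ i ω)) ℙ)
    (phi : ℝ) (hphi : phi = (1 / Lam) * ∫ a in (0:ℝ)..t, l a * Fξ (L a))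
    (hphi_pos : 0 < phi)
    (psi : ℝ → ℝ)
    (hpsi : ∀ y : ℝ, psi y = (1 / Lam) * ∫ a in (0:ℝ)..t,
      l a * (1 - Fτ (t - a)) * (Fξ (max (L a) y) - Fξ (max R y))) :
    ∀ y : ℝ, 0 < y →
      ((ℙ[|{ω | ∀ i, ξ i ω < L (A i ω)}])
          {ω | y < Finset.univ.sup'
              (Finset.univ_nonempty_iff.mpr (Fin.pos_iff_nonempty.mp hn))
              (fun i => ξ i ω * (if R ≤ ξ i ω then (1:ℝ) else 0)
                * (if t - A i ω ≤ τ i ω then (1:ℝ) else 0))}).toReal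
        = 1 - (1 - psi y / phi) ^ n :=
  conditional_best_offer_tail_general t ht l hl_int hl_nonneg Lam hLam_pos R L0 L hL hLbounds Fξ
    hFξ_cont Fτ hFτ_cont n hn A ξ τ hA hξ hτ hAlaw hFξ hFτ hcomp_indep hiid phi hphi hphi_pos psi
    hpsi
end

section
/- Let t > 0, let λ : [0, t] → [0, ∞) be integrable with Λ(t) = ∫_0^t λ(a) da > 0, let r : [0, t] → ℝ be integrable, and let R > 0. Let N be a Poisson random variable with mean Λ(t), and let (A_i, ξ_i, τ_i)_{i ≥ 1} be i.i.d. triples, independent of N, with mutually independent components: A_i has density a ↦ λ(a)/Λ(t) on [0, t], ξ_i is nonnegative and integrable with continuous cumulative distribution function F_ξ, and τ_i ≥ 0 has continuous cumulative distribution function F_τ. Define the discounted payoff X(t) = e^{−∫_0^t r(s) ds} · max_{1 ≤ i ≤ N} ξ_i · 1{ξ_i ≥ R} · 1{τ_i ≥ t − A_i} (with the maximum equal to 0 if N = 0). Then E[X(t)] = e^{−∫_0^t r(s) ds} ∫_0^∞ ( 1 − e^{−Λ(t) ψ(t, y)} ) dy, where ψ(t, y) = ( 1 − F_ξ( max(R,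 y) ) ) ( 1 − (1/Λ(t)) ∫_0^t λ(a) F_τ(t − a) da ). -/
/-!
An offer contributes more than `y ≥ 0` to the payoff iff its value is at least `R`, exceeds `y`,
and the offer is still available at time `t`; by independence of its components this has
probability `ψ(y)` (continuity of `F_ξ` and `F_τ` makes strict and non-strict thresholds agree).
The offers are i.i.d. and independent of `N ~ Poisson(Λ)`, so the best accepted offer `M` stays
below `y` with probability `∑ₙ P(N = n) (1 - ψ(y))ⁿ = exp(-Λ ψ(y))`, and the layer-cake formula
`E[M] = ∫₀^∞ P(M > y) dy` gives the result.
-/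

open MeasureTheory ProbabilityTheory Set
open scoped NNReal

section ProbabilityMeasure

variable {Ω : Type*} [MeasurableSpace Ω] {μ : Measure Ω} [IsProbabilityMeasure μ]

lemma measureReal_lt_eq_one_sub_measureReal_le {f : Ω → ℝ} (hf : Measurable f) (y : ℝ) :
    μ.real {ω | y < f ω} = 1 - μ.real {ω | f ω ≤ y} := by
  rw [← probReal_compl_eq_one_sub (measurableSet_le hf measurable_const)]
  congr 1; ext; simp

lemma measureReal_le_eq_one_sub_measureReal_lt {f : Ω → ℝ} (hf : Measurable f) (y : ℝ) :
    μ.real {ω | f ω ≤ y} = 1 - μ.real {ω | y < f ω} := by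
  rw [measureReal_lt_eq_one_sub_measureReal_le hf, sub_sub_cancel]

section CDF

variable {X : Ω → ℝ} {F : ℝ → ℝ}

lemma measureReal_lt_eq_one_sub_cdf (hX : Measurable X)
    (hF : ∀ x, F x = μ.real {ω | X ω ≤ x}) (c : ℝ) :
    μ.real {ω | c < X ω} = 1 - F c := by
  rw [measureReal_lt_eq_one_sub_measureReal_le hX, hF]

lemma measure_eq_zero_of_continuous_cdf (hX : Measurable X) (hFc : Continuous F)
    (hF : ∀ x, F x = μ.real {ω | X ω ≤ x}) (c : ℝ) :
    μ {ω | X ω = c} = 0 := by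
  have := Measure.isProbabilityMeasure_map (μ := μ) hX.aemeasurable
  have hcdf : ⇑(cdf (μ.map X)) = F := funext fun x => by
    rw [cdf_eq_real, map_measureReal_apply hX measurableSet_Iic, hF]; rfl
  have hleft : Function.leftLim (cdf (μ.map X)) c = F c := by
    rw [hcdf]
    exact leftLim_eq_of_tendsto (hFc.continuousAt.tendsto.mono_left nhdsWithin_le_nhds)
  rw [show {ω | X ω = c} = X ⁻¹' {c} from rfl, ← Measure.map_apply hX (measurableSet_singleton c),
    ← measure_cdf (μ.map X), StieltjesFunction.measure_singleton, hleft, hcdf, sub_self,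
    ENNReal.ofReal_zero]

lemma measureReal_le_eq_one_sub_cdf (hX : Measurable X) (hFc : Continuous F)
    (hF : ∀ x, F x = μ.real {ω | X ω ≤ x}) (c : ℝ) :
    μ.real {ω | c ≤ X ω} = 1 - F c := by
  rw [← measureReal_lt_eq_one_sub_cdf hX hF c]
  refine measureReal_congr (ae_eq_set.2 ⟨?_, ?_⟩)
  · refine measure_mono_null (fun ω hω => ?_) (measure_eq_zero_of_continuous_cdf hX hFc hF c)
    exact (hω.1.eq_of_not_lt hω.2).symm
  · exact measure_mono_null (fun ω ⟨h1, h2⟩ => (h2 (le_of_lt h1 : c ≤ X ω)).elim) measure_empty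

lemma measureReal_le_and_lt_eq_one_sub_cdf (hX : Measurable X) (hFc : Continuous F)
    (hF : ∀ x, F x = μ.real {ω | X ω ≤ x}) (c y : ℝ) :
    μ.real {ω | c ≤ X ω ∧ y < X ω} = 1 - F (max c y) := by
  rcases lt_or_ge y c with hyc | hcy
  · have : {ω | c ≤ X ω ∧ y < X ω} = {ω | c ≤ X ω} :=
      ext fun ω => ⟨And.left, fun h => ⟨h, hyc.trans_le h⟩⟩
    rw [this, max_eq_left hyc.le, measureReal_le_eq_one_sub_cdf hX hFc hF]
  · have : {ω | c ≤ X ω ∧ y < X ω} = {ω | y < X ω} :=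
      ext fun ω => ⟨And.right, fun h => ⟨hcy.trans h.le, h⟩⟩
    rw [this, max_eq_right hcy, measureReal_lt_eq_one_sub_cdf hX hF]

end CDF

end ProbabilityMeasure

lemma ProbabilityTheory.IndepFun.measure_preimage_eq_lintegral {Ω α β : Type*} [MeasurableSpace Ω]
    [MeasurableSpace α] [MeasurableSpace β] {μ : Measure Ω} [IsFiniteMeasure μ]
    {X : Ω → α} {Y : Ω → β} (hX : Measurable X) (hY : Measurable Y) (hXY : IndepFun X Y μ)
    {S : Set (α × β)} (hS : MeasurableSet S) :
    μ {ω | (X ω, Y ω) ∈ S} = ∫⁻ x, μ.map Y (Prod.mk x ⁻¹' S) ∂μ.map X := by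
  rw [← Measure.prod_apply hS, ← (indepFun_iff_map_prod_eq_prod_map_map hX.aemeasurable
    hY.aemeasurable).1 hXY, Measure.map_apply (hX.prodMk hY) hS]
  rfl

lemma setIntegral_Icc_div_mul_one_sub {l G : ℝ → ℝ} {t Λ : ℝ} (ht : 0 ≤ t)
    (hl : IntegrableOn l (Icc 0 t)) (hlG : IntegrableOn (fun a => l a * G a) (Icc 0 t))
    (hΛ : Λ = ∫ a in 0..t, l a) (hΛ0 : Λ ≠ 0) :
    ∫ a in Icc 0 t, l a / Λ * (1 - G a) = 1 - 1 / Λ * ∫ a in 0..t, l a * G a := by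
  have hsplit : ∀ a, l a / Λ * (1 - G a) = Λ⁻¹ * l a - Λ⁻¹ * (l a * G a) := fun a => by ring
  simp only [hsplit, intervalIntegral.integral_of_le ht, ← integral_Icc_eq_integral_Ioc] at hΛ ⊢
  rw [integral_sub (hl.const_mul _) (hlG.const_mul _), integral_const_mul, integral_const_mul,
    ← hΛ, inv_mul_cancel₀ hΛ0, one_div]

lemma hasSum_poissonMeasure_real_mul_pow (r : ℝ≥0) (q : ℝ) :
    HasSum (fun n => (poissonMeasure r).real {n} * q ^ n) (Real.exp (-(r * (1 - q)))) := by
  have h := (NormedSpace.expSeries_div_hasSum_exp ((r : ℝ) * q)).mul_left (Real.exp (-r))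
  rw [← Real.exp_eq_exp_ℝ, ← Real.exp_add] at h
  have hterm : (fun n => (poissonMeasure r).real {n} * q ^ n)
      = fun n => Real.exp (-r) * ((r * q) ^ n / n.factorial) := by
    funext n; rw [poissonMeasure_real_singleton]; ring
  rwa [hterm, show -((r : ℝ) * (1 - q)) = -r + r * q by ring]

lemma measureReal_forall_Icc_mem_of_poisson {Ω β : Type*} [MeasurableSpace Ω] [MeasurableSpace β]
    {μ : Measure Ω} [IsFiniteMeasure μ] {N : Ω → ℕ} {Z : ℕ → Ω → β} {r : ℝ≥0} {S : Set β} {q : ℝ}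
    (hN : Measurable N) (hNlaw : μ.map N = poissonMeasure r) (hZ : ∀ i, Measurable (Z i))
    (hZindep : iIndepFun Z μ) (hNZ : IndepFun N (fun ω i => Z i ω) μ) (hS : MeasurableSet S)
    (hq : ∀ i, μ.real (Z i ⁻¹' S) = q) :
    μ.real {ω | ∀ i ∈ Finset.Icc 1 (N ω), Z i ω ∈ S} = Real.exp (-(r * (1 - q))) := by
  have hq0 : 0 ≤ q := hq 0 ▸ measureReal_nonneg
  set B : ℕ → Set (ℕ → β) := fun n => {f | ∀ i ∈ Finset.Icc 1 n, f i ∈ S}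
  have hB : ∀ n, MeasurableSet (B n) := fun n => by
    simp only [B, ofPred_forall]
    exact .biInter (Finset.countable_toSet _) fun i _ => measurable_pi_apply i hS
  have hunion : {ω | ∀ i ∈ Finset.Icc 1 (N ω), Z i ω ∈ S}
      = ⋃ n, N ⁻¹' {n} ∩ (fun ω i => Z i ω) ⁻¹' B n := by
    ext ω; simp [B]
  have hqS : ∀ i, μ (Z i ⁻¹' S) = ENNReal.ofReal q := fun i => by rw [← hq i, ofReal_measureReal]
  have hterm : ∀ n, μ (N ⁻¹' {n} ∩ (fun ω i => Z i ω) ⁻¹' B n)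
      = ENNReal.ofReal ((poissonMeasure r).real {n} * q ^ n) := by
    intro n
    have hprod : μ ((fun ω i => Z i ω) ⁻¹' B n) = ∏ i ∈ Finset.Icc 1 n, μ (Z i ⁻¹' S) := by
      simp only [B, preimage_ofPred_eq]
      rw [← hZindep.meas_biInter fun i _ => ⟨S, hS, rfl⟩]
      congr 1; ext ω; simp
    rw [hNZ.measure_inter_preimage_eq_mul _ _ (measurableSet_singleton n) (hB n), hprod,
      Finset.prod_congr rfl fun i _ => hqS i,
      Finset.prod_const, Nat.card_Icc, Nat.add_sub_cancel,
      ← Measure.map_apply hN (measurableSet_singleton n), hNlaw,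
      ENNReal.ofReal_mul measureReal_nonneg, ofReal_measureReal, ENNReal.ofReal_pow hq0]
  have hsum := hasSum_poissonMeasure_real_mul_pow r q
  rw [measureReal_def, hunion, measure_iUnion, tsum_congr hterm, ← ENNReal.ofReal_tsum_of_nonneg
    (fun n => mul_nonneg measureReal_nonneg (pow_nonneg hq0 n)) hsum.summable, hsum.tsum_eq,
    ENNReal.toReal_ofReal (Real.exp_pos _).le]
  · exact fun m n hmn => ((disjoint_singleton.2 hmn).preimage N).mono
      inter_subset_left inter_subset_left
  · exact fun n => (hN (measurableSet_singleton n)).inter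
      (measurable_pi_lambda _ (fun i => hZ i) (hB n))

lemma integral_eq_setIntegral_Ioi_measureReal_lt {α : Type*} [MeasurableSpace α] {μ : Measure α}
    [IsFiniteMeasure μ] {f : α → ℝ} (hf_nonneg : 0 ≤ᵐ[μ] f) (hf : AEMeasurable f μ) :
    ∫ x, f x ∂μ = ∫ y in Ioi 0, μ.real {x | y < f x} := by
  have htail : Measurable fun y : ℝ => μ.real {x | y < f x} :=
    (Antitone.measurable (f := fun y : ℝ => μ {x | y < f x})
      fun _ _ hyz => measure_mono fun _ h => lt_of_le_of_lt hyz h).ennreal_toReal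
  rw [integral_eq_lintegral_of_nonneg_ae hf_nonneg hf.aestronglyMeasurable,
    integral_eq_lintegral_of_nonneg_ae (ae_of_all _ fun _ => measureReal_nonneg)
      htail.aestronglyMeasurable, lintegral_eq_lintegral_meas_lt μ hf_nonneg hf]
  congr 1
  exact lintegral_congr fun y => (ofReal_measureReal (measure_ne_top _ _)).symm

lemma Finset.measurable_fold_max {ι δ : Type*} [MeasurableSpace δ] (s : Finset ι) (b : ℝ)
    {f : ι → δ → ℝ} (hf : ∀ i, Measurable (f i)) :
    Measurable fun x => s.fold max b fun i => f i x := by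
  classical
  induction s using Finset.induction_on with
  | empty => exact measurable_const
  | insert i s hi ih =>
    simp only [Finset.fold_insert hi]
    exact (hf i).max ih

lemma measurable_fold_max_Icc {Ω : Type*} [MeasurableSpace Ω] {N : Ω → ℕ} {Y : ℕ → Ω → ℝ}
    (hN : Measurable N) (hY : ∀ i, Measurable (Y i)) :
    Measurable fun ω => (Finset.Icc 1 (N ω)).fold max 0 fun i => Y i ω := by
  have hfold : Measurable fun p : Ω × ℕ => (Finset.Icc 1 p.2).fold max 0 fun i => Y i p.1 :=
    measurable_from_prod_countable_left fun n => Finset.measurable_fold_max (Finset.Icc 1 n) 0 hY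
  exact hfold.comp (measurable_id.prodMk hN)

/-- The payoff at time `t` of an offer `(a, x, s)` arriving at time `a`, of value `x` and withdrawn
at time `a + s`, for a seller with reservation price `R`. -/
noncomputable def offerPayoff (R t : ℝ) (p : ℝ × ℝ × ℝ) : ℝ :=
  p.2.1 * (if R ≤ p.2.1 then 1 else 0) * (if t - p.1 ≤ p.2.2 then 1 else 0)

lemma measurable_offerPayoff (R t : ℝ) : Measurable (offerPayoff R t) := by
  unfold offerPayoff
  refine ((measurable_fst.comp measurable_snd).mul (Measurable.ite ?_ measurable_const
    measurable_const)).mul (Measurable.ite ?_ measurable_const measurable_const)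
  · exact measurableSet_le measurable_const (measurable_fst.comp measurable_snd)
  · exact measurableSet_le (measurable_const.sub measurable_fst)
      (measurable_snd.comp measurable_snd)

lemma lt_offerPayoff_iff {R t y : ℝ} (hy : 0 ≤ y) (p : ℝ × ℝ × ℝ) :
    y < offerPayoff R t p ↔ (R ≤ p.2.1 ∧ y < p.2.1) ∧ t - p.1 ≤ p.2.2 := by
  unfold offerPayoff
  split_ifs <;> simp [*, not_lt.2 hy]

section Offers

variable {Ω : Type*} [MeasurableSpace Ω] {μ : Measure Ω} [IsProbabilityMeasure μ]

lemma measureReal_sub_le_eq_one_sub_integral {A T : Ω → ℝ} {l F : ℝ → ℝ} {t Λ : ℝ} (ht : 0 ≤ t)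
    (hA : Measurable A) (hT : Measurable T) (hAT : IndepFun A T μ)
    (hl : IntegrableOn l (Icc 0 t)) (hl_nonneg : ∀ a ∈ Icc 0 t, 0 ≤ l a)
    (hΛ : Λ = ∫ a in 0..t, l a) (hΛ_pos : 0 < Λ)
    (hAlaw : μ.map A = (volume.restrict (Icc 0 t)).withDensity fun a => ENNReal.ofReal (l a / Λ))
    (hFc : Continuous F) (hF : ∀ x, F x = μ.real {ω | T ω ≤ x}) :
    μ.real {ω | t - A ω ≤ T ω} = 1 - 1 / Λ * ∫ a in 0..t, l a * F (t - a) := by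
  have hS : MeasurableSet {p : ℝ × ℝ | t - p.1 ≤ p.2} :=
    measurableSet_le (measurable_const.sub measurable_fst) measurable_snd
  have hFt : Continuous fun a => F (t - a) := hFc.comp (continuous_const.sub continuous_id)
  have hF_mem : ∀ x, 0 ≤ F x ∧ F x ≤ 1 := fun x => hF x ▸ ⟨measureReal_nonneg, measureReal_le_one⟩
  have hF_bound : ∀ a, ‖F (t - a)‖ ≤ 1 := fun a =>
    abs_le.2 ⟨by linarith [(hF_mem (t - a)).1], (hF_mem (t - a)).2⟩
  have hlF : IntegrableOn (fun a => l a * F (t - a)) (Icc 0 t) :=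
    (hl.bdd_mul hFt.aestronglyMeasurable (ae_of_all _ hF_bound)).congr
      (ae_of_all _ fun a => mul_comm _ _)
  have hint : IntegrableOn (fun a => l a / Λ * (1 - F (t - a))) (Icc 0 t) :=
    ((hl.div_const Λ).sub (hlF.div_const Λ)).congr
      (ae_of_all _ fun a => by simp only [Pi.sub_apply]; ring)
  have hnonneg : ∀ a ∈ Icc 0 t, 0 ≤ l a / Λ * (1 - F (t - a)) := fun a ha =>
    mul_nonneg (div_nonneg (hl_nonneg a ha) hΛ_pos.le) (sub_nonneg.2 (hF_mem _).2)
  have hsection : ∀ a, μ.map T (Prod.mk a ⁻¹' {p : ℝ × ℝ | t - p.1 ≤ p.2})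
      = ENNReal.ofReal (1 - F (t - a)) := fun a => by
    rw [Measure.map_apply hT (measurable_prodMk_left hS), ← ofReal_measureReal]
    exact congrArg _ (measureReal_le_eq_one_sub_cdf hT hFc hF (t - a))
  have hsurv : Measurable fun a => ENNReal.ofReal (1 - F (t - a)) :=
    (continuous_const.sub hFt).measurable.ennreal_ofReal
  have hmass : μ {ω | t - A ω ≤ T ω}
      = ENNReal.ofReal (∫ a in Icc 0 t, l a / Λ * (1 - F (t - a))) := by
    rw [ofReal_integral_eq_lintegral_ofReal hint
      ((ae_restrict_iff' measurableSet_Icc).2 (ae_of_all _ hnonneg))]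
    refine (hAT.measure_preimage_eq_lintegral hA hT hS).trans ?_
    simp only [hsection, hAlaw]
    rw [lintegral_withDensity_eq_lintegral_mul₀ (hl.aemeasurable.div_const Λ).ennreal_ofReal
      hsurv.aemeasurable]
    refine setLIntegral_congr_fun measurableSet_Icc fun a ha => ?_
    rw [Pi.mul_apply, ← ENNReal.ofReal_mul (div_nonneg (hl_nonneg a ha) hΛ_pos.le)]
  rw [measureReal_def, hmass, ENNReal.toReal_ofReal (setIntegral_nonneg measurableSet_Icc hnonneg),
    setIntegral_Icc_div_mul_one_sub ht hl hlF hΛ hΛ_pos.ne']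

lemma measureReal_lt_offerPayoff {A ξ τ : Ω → ℝ} {F : ℝ → ℝ} {R t y : ℝ} (hy : 0 ≤ y)
    (hA : Measurable A) (hξ : Measurable ξ) (hτ : Measurable τ) (hindep : iIndepFun ![A, ξ, τ] μ)
    (hFc : Continuous F) (hF : ∀ x, F x = μ.real {ω | ξ ω ≤ x}) :
    μ.real {ω | y < offerPayoff R t (A ω, ξ ω, τ ω)}
      = (1 - F (max R y)) * μ.real {ω | t - A ω ≤ τ ω} := by
  have hmeas : ∀ j, Measurable (![A, ξ, τ] j) := fun j => by fin_cases j <;> assumption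
  have hindep' : IndepFun ξ (fun ω => (A ω, τ ω)) μ := by
    simpa using (hindep.indepFun_prodMk hmeas 0 2 1 (by decide) (by decide)).symm
  have hset : {ω | y < offerPayoff R t (A ω, ξ ω, τ ω)}
      = ξ ⁻¹' {x | R ≤ x ∧ y < x} ∩ (fun ω => (A ω, τ ω)) ⁻¹' {p | t - p.1 ≤ p.2} := by
    ext ω; simp [lt_offerPayoff_iff hy]
  have hvalue : MeasurableSet {x : ℝ | R ≤ x ∧ y < x} :=
    (measurableSet_le measurable_const measurable_id).inter
      (measurableSet_lt measurable_const measurable_id)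
  have havail : MeasurableSet {p : ℝ × ℝ | t - p.1 ≤ p.2} :=
    measurableSet_le (measurable_const.sub measurable_fst) measurable_snd
  rw [hset, measureReal_def, hindep'.measure_inter_preimage_eq_mul _ _ hvalue havail,
    ENNReal.toReal_mul, ← measureReal_def, ← measureReal_def]
  exact congrArg (· * _) (measureReal_le_and_lt_eq_one_sub_cdf hξ hFc hF R y)

end Offers

theorem expected_discounted_payoff_no_list_price_general
    {Ω : Type*} [MeasureSpace Ω] [IsProbabilityMeasure (ℙ : Measure Ω)]
    (t : ℝ) (ht : 0 < t)
    (l : ℝ → ℝ) (hl_int : IntegrableOn l (Set.Icc 0 t))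
    (hl_nonneg : ∀ a ∈ Set.Icc (0:ℝ) t, 0 ≤ l a)
    (Lam : ℝ) (hLam : Lam = ∫ a in (0:ℝ)..t, l a) (hLam_pos : 0 < Lam)
    (r : ℝ → ℝ)
    (R : ℝ)
    (N : Ω → ℕ) (hNmeas : Measurable N)
    (hN : Measure.map N ℙ = poissonMeasure Lam.toNNReal)
    (A ξ τ : ℕ → Ω → ℝ)
    (hA : ∀ i, Measurable (A i)) (hξ : ∀ i, Measurable (ξ i)) (hτ : ∀ i, Measurable (τ i))
    (hAlaw : ∀ i, Measure.map (A i) ℙ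
      = (volume.restrict (Set.Icc (0:ℝ) t)).withDensity
          (fun a => ENNReal.ofReal (l a / Lam)))
    (Fξ : ℝ → ℝ) (hFξ_cont : Continuous Fξ)
    (hFξ : ∀ i, ∀ x : ℝ, Fξ x = (ℙ {ω | ξ i ω ≤ x}).toReal)
    (Fτ : ℝ → ℝ) (hFτ_cont : Continuous Fτ)
    (hFτ : ∀ i, ∀ x : ℝ, Fτ x = (ℙ {ω | τ i ω ≤ x}).toReal)
    (hcomp_indep : ∀ i, iIndepFun ![A i, ξ i, τ i] ℙ)
    (hiid : iIndepFun (fun i ω => (A i ω, ξ i ω, τ i ω)) ℙ)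
    (hNindep : IndepFun N (fun ω => fun i => (A i ω, ξ i ω, τ i ω)) ℙ)
    (psi : ℝ → ℝ)
    (hpsi : ∀ y : ℝ, psi y = (1 - Fξ (max R y))
      * (1 - (1 / Lam) * ∫ a in (0:ℝ)..t, l a * Fτ (t - a))) :
    (∫ ω, Real.exp (-∫ s in (0:ℝ)..t, r s)
          * (Finset.Icc 1 (N ω)).fold max 0
              (fun i => ξ i ω * (if R ≤ ξ i ω then (1:ℝ) else 0)
                * (if t - A i ω ≤ τ i ω then (1:ℝ) else 0)) ∂ℙ)
      = Real.exp (-∫ s in (0:ℝ)..t, r s)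
          * ∫ y in Set.Ioi (0:ℝ), (1 - Real.exp (-(Lam * psi y))) := by
  set Z : ℕ → Ω → ℝ × ℝ × ℝ := fun i ω => (A i ω, ξ i ω, τ i ω)
  set M : Ω → ℝ := fun ω => (Finset.Icc 1 (N ω)).fold max 0 fun i => offerPayoff R t (Z i ω)
  have hZ : ∀ i, Measurable (Z i) := fun i => (hA i).prodMk ((hξ i).prodMk (hτ i))
  have hY : ∀ i, Measurable fun ω => offerPayoff R t (Z i ω) :=
    fun i => (measurable_offerPayoff R t).comp (hZ i)
  have hM_meas : Measurable M := measurable_fold_max_Icc hNmeas hY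
  have hoffer : ∀ i, ∀ y, 0 ≤ y →
      (ℙ : Measure Ω).real {ω | y < offerPayoff R t (Z i ω)} = psi y := fun i y hy => by
    have hAτ : IndepFun (A i) (τ i) ℙ := (hcomp_indep i).indepFun (by decide : (0 : Fin 3) ≠ 2)
    rw [measureReal_lt_offerPayoff hy (hA i) (hξ i) (hτ i) (hcomp_indep i) hFξ_cont (hFξ i),
      measureReal_sub_le_eq_one_sub_integral ht.le (hA i) (hτ i) hAτ hl_int hl_nonneg hLam
        hLam_pos (hAlaw i) hFτ_cont (hFτ i), hpsi]
  have htail : ∀ y, 0 < y →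
      (ℙ : Measure Ω).real {ω | y < M ω} = 1 - Real.exp (-(Lam * psi y)) := by
    intro y hy
    have hmax : {ω | M ω ≤ y}
        = {ω | ∀ i ∈ Finset.Icc 1 (N ω), Z i ω ∈ {p | offerPayoff R t p ≤ y}} := by
      ext ω; simp [M, Finset.fold_max_le, hy.le]
    rw [measureReal_lt_eq_one_sub_measureReal_le hM_meas, hmax,
      measureReal_forall_Icc_mem_of_poisson hNmeas hN hZ hiid hNindep
        (measurableSet_le (measurable_offerPayoff R t) measurable_const)
        (q := 1 - psi y) fun i => (measureReal_le_eq_one_sub_measureReal_lt (hY i) y).trans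
          (by rw [hoffer i y hy.le]),
      Real.coe_toNNReal _ hLam_pos.le, sub_sub_cancel]
  have hM_nonneg : ∀ ω, 0 ≤ M ω := fun ω => (Finset.le_fold_max 0).2 (Or.inl le_rfl)
  change ∫ ω, _ * M ω ∂ℙ = _
  rw [integral_const_mul, integral_eq_setIntegral_Ioi_measureReal_lt (ae_of_all _ hM_nonneg)
    hM_meas.aemeasurable, setIntegral_congr_fun measurableSet_Ioi htail]

/-- Theorem 6 (no announced list price): the seller's expected discounted payoff at time
`t` equals `e^{−∫_0^t r} ∫_0^∞ (1 − e^{−Λ(t) ψ(t,y)}) dy`, where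
`ψ(t,y) = (1 − F_ξ(max(R,y))) (1 − (1/Λ(t)) ∫_0^t λ(a) F_τ(t−a) da)`. -/
theorem expected_discounted_payoff_no_list_price
    {Ω : Type*} [MeasureSpace Ω] [IsProbabilityMeasure (ℙ : Measure Ω)]
    (t : ℝ) (ht : 0 < t)
    (l : ℝ → ℝ) (hl_int : IntegrableOn l (Set.Icc 0 t))
    (hl_nonneg : ∀ a ∈ Set.Icc (0:ℝ) t, 0 ≤ l a)
    (Lam : ℝ) (hLam : Lam = ∫ a in (0:ℝ)..t, l a) (hLam_pos : 0 < Lam)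
    (r : ℝ → ℝ) (hr_int : IntervalIntegrable r volume 0 t)
    (R : ℝ) (hR : 0 < R)
    (N : Ω → ℕ) (hNmeas : Measurable N)
    (hN : Measure.map N ℙ = poissonMeasure Lam.toNNReal)
    (A ξ τ : ℕ → Ω → ℝ)
    (hA : ∀ i, Measurable (A i)) (hξ : ∀ i, Measurable (ξ i)) (hτ : ∀ i, Measurable (τ i))
    (hξ_nonneg : ∀ i ω, 0 ≤ ξ i ω) (hξ_int : ∀ i, Integrable (ξ i) ℙ)
    (hτ_nonneg : ∀ i ω, 0 ≤ τ i ω)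
    (hAlaw : ∀ i, Measure.map (A i) ℙ
      = (volume.restrict (Set.Icc (0:ℝ) t)).withDensity
          (fun a => ENNReal.ofReal (l a / Lam)))
    (Fξ : ℝ → ℝ) (hFξ_cont : Continuous Fξ)
    (hFξ : ∀ i, ∀ x : ℝ, Fξ x = (ℙ {ω | ξ i ω ≤ x}).toReal)
    (Fτ : ℝ → ℝ) (hFτ_cont : Continuous Fτ)
    (hFτ : ∀ i, ∀ x : ℝ, Fτ x = (ℙ {ω | τ i ω ≤ x}).toReal)
    (hcomp_indep : ∀ i, iIndepFun ![A i, ξ i, τ i] ℙ)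
    (hiid : iIndepFun (fun i ω => (A i ω, ξ i ω, τ i ω)) ℙ)
    (hNindep : IndepFun N (fun ω => fun i => (A i ω, ξ i ω, τ i ω)) ℙ)
    (psi : ℝ → ℝ)
    (hpsi : ∀ y : ℝ, psi y = (1 - Fξ (max R y))
      * (1 - (1 / Lam) * ∫ a in (0:ℝ)..t, l a * Fτ (t - a))) :
    (∫ ω, Real.exp (-∫ s in (0:ℝ)..t, r s)
          * (Finset.Icc 1 (N ω)).fold max 0
              (fun i => ξ i ω * (if R ≤ ξ i ω then (1:ℝ) else 0)
                * (if t - A i ω ≤ τ i ω then (1:ℝ) else 0)) ∂ℙ)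
      = Real.exp (-∫ s in (0:ℝ)..t, r s)
          * ∫ y in Set.Ioi (0:ℝ), (1 - Real.exp (-(Lam * psi y))) :=
  expected_discounted_payoff_no_list_price_general t ht l hl_int hl_nonneg Lam hLam hLam_pos r R N
    hNmeas hN A ξ τ hA hξ hτ hAlaw Fξ hFξ_cont hFξ Fτ hFτ_cont hFτ hcomp_indep hiid hNindep psi hpsi
end
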